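/- arXiv:2110.06129 — 4 statements merged into one kernel-verified Lean document; each statement's English description precedes it below -/
import Mathlib

section
/- For every prime p, every natural number n, and every natural number m ≥ 1, the Bell numbers satisfy B_{n+p^m} ≡ m·B_n + B_{n+1} (mod p). -/
open Finset

/-- Stirling numbers of the second kind. -/
def S2 : ℕ → ℕ → ℕ
  | 0, 0 => 1
  | 0, _ + 1 => 0
  | _ + 1, 0 => 0
  | n + 1, k + 1 => (k + 1) * S2 n (k + 1) + S2 n k

/-- Bell numbers. -/
def bell (n : ℕ) : ℕ := ∑ k ∈ Finset.range (n + 1), S2 n k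

/-- r-Stirling numbers of the second kind. -/
def rS2 (r : ℕ) : ℕ → ℕ → ℕ
  | 0, 0 => 1
  | 0, _ + 1 => 0
  | n + 1, 0 => r * rS2 r n 0
  | n + 1, k + 1 => rS2 r n k + (k + 1 + r) * rS2 r n (k + 1)

/-- Unsigned r-Stirling numbers of the first kind. -/
def rS1 (r : ℕ) : ℕ → ℕ → ℕ
  | 0, 0 => 1
  | 0, _ + 1 => 0
  | n + 1, 0 => (r + n) * rS1 r n 0
  | n + 1, k + 1 => rS1 r n k + (r + n) * rS1 r n (k + 1)

/-- r-Bell numbers for integer r. -/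
def rBell (n : ℕ) (r : ℤ) : ℤ :=
  ∑ j ∈ Finset.range (n + 1), (n.choose j : ℤ) * r ^ (n - j) * (bell j : ℤ)

/-- r-Bell numbers for natural r, via r-Stirling numbers. -/
def rBellNat (n r : ℕ) : ℕ := ∑ k ∈ Finset.range (n + 1), rS2 r n k

/-! ### Basic lemmas about `S2` and the Bell recurrence -/

lemma S2_succ_zero (n : ℕ) : S2 (n + 1) 0 = 0 := rfl

lemma S2_zero_succ (k : ℕ) : S2 0 (k + 1) = 0 := rfl

lemma S2_succ_succ (n k : ℕ) : S2 (n + 1) (k + 1) = (k + 1) * S2 n (k + 1) + S2 n k := rfl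

lemma S2_eq_zero_of_lt : ∀ {n k : ℕ}, n < k → S2 n k = 0
  | 0, k + 1, _ => rfl
  | n + 1, k + 1, h => by
    have h1 : n < k + 1 := Nat.lt_of_succ_lt_succ h |>.trans (Nat.lt_succ_self k)
    have h2 : n < k := Nat.lt_of_succ_lt_succ h
    show (k + 1) * S2 n (k + 1) + S2 n k = 0
    rw [S2_eq_zero_of_lt h1, S2_eq_zero_of_lt h2, mul_zero]

lemma S2_succ_one : ∀ n : ℕ, S2 (n + 1) 1 = 1
  | 0 => rfl
  | n + 1 => by
    rw [S2_succ_succ, S2_succ_zero, S2_succ_one n]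

lemma S2_key : ∀ n k : ℕ, S2 (n + 1) (k + 1) = ∑ j ∈ range (n + 1), n.choose j * S2 j k := by
  intro n
  induction n with
  | zero => intro k; show (k+1) * S2 0 (k+1) + S2 0 k = _; simp [S2]
  | succ n ih =>
    intro k
    rw [S2_succ_succ, Finset.sum_range_succ' (fun j => (n+1).choose j * S2 j k)]
    cases k with
    | zero =>
      simp only [S2_succ_zero, add_zero, S2_succ_one, S2, mul_zero, mul_one,
        Nat.choose_zero_right, zero_add]
      rw [Finset.sum_eq_zero (fun j _ => by simp [S2_succ_zero]), zero_add]
      cases n with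
      | zero => rfl
      | succ n' => simp [S2_succ_one, S2_succ_zero]
    | succ k =>
      have swap : ∑ j ∈ range (n+1), n.choose j * S2 j (k+1)
          = ∑ j ∈ range (n+1), n.choose (j+1) * S2 (j+1) (k+1) := by
        rw [Finset.sum_range_succ' (fun j => n.choose j * S2 j (k+1)),
          Finset.sum_range_succ (fun j => n.choose (j+1) * S2 (j+1) (k+1))]
        simp [S2_zero_succ, Nat.choose_succ_self]
      rw [ih (k+1), ih k]
      have hR : ∑ j ∈ range (n+1), (n+1).choose (j+1) * S2 (j+1) (k+1)
          = ∑ j ∈ range (n+1), ((k+1) * (n.choose j * S2 j (k+1)) + n.choose j * S2 j k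
              + n.choose (j+1) * S2 (j+1) (k+1)) := by
        refine Finset.sum_congr rfl fun j _ => ?_
        rw [Nat.choose_succ_succ, add_mul, S2_succ_succ, mul_add]
        ring
      rw [hR, Finset.sum_add_distrib, Finset.sum_add_distrib, ← Finset.mul_sum, ← swap,
        S2_zero_succ, mul_zero, add_zero]
      ring

lemma bell_eq_sum_of_le {j n : ℕ} (h : j ≤ n) : bell j = ∑ k ∈ range (n + 1), S2 j k := by
  unfold bell
  refine Finset.sum_subset (by simp; omega) (fun k _ hk => ?_)
  simp only [Finset.mem_range, not_lt] at hk
  exact S2_eq_zero_of_lt (by omega)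

lemma bell_succ (n : ℕ) : bell (n + 1) = ∑ j ∈ range (n + 1), n.choose j * bell j := by
  unfold bell
  rw [Finset.sum_range_succ' (fun k => S2 (n+1) k), S2_succ_zero, add_zero]
  simp only [S2_key]
  rw [Finset.sum_comm]
  refine Finset.sum_congr rfl fun j hj => ?_
  rw [← Finset.mul_sum, ← bell_eq_sum_of_le (by simp at hj; omega)]
  rfl

/-! ### The umbral linear functional -/

section Umbral
open Polynomial
variable {R : Type*} [CommRing R] (b : ℕ → R)

noncomputable def Lb : R[X] →ₗ[R] R :=
  Polynomial.lsum (fun k => LinearMap.toSpanSingleton R R (b k))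

lemma Lb_monomial (n : ℕ) (a : R) : Lb b (monomial n a) = a * b n := by
  simp [Lb, Polynomial.lsum_apply, Polynomial.sum_monomial_index,
    LinearMap.toSpanSingleton_apply, smul_eq_mul]

lemma Lb_X_pow (n : ℕ) : Lb b (X ^ n) = b n := by
  rw [X_pow_eq_monomial, Lb_monomial, one_mul]

variable (hb : ∀ n, b (n + 1) = ∑ k ∈ range (n + 1), (n.choose k : R) * b k)

include hb

lemma Lb_X_add_one_pow (n : ℕ) : Lb b ((X + 1) ^ n) = b (n + 1) := by
  rw [add_pow, map_sum, hb n]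
  refine Finset.sum_congr rfl fun k _ => ?_
  have : (X ^ k * 1 ^ (n - k) * (n.choose k : R[X])) = monomial k ((n.choose k : R)) := by
    rw [one_pow, mul_one, ← C_eq_natCast, mul_comm, C_mul_X_pow_eq_monomial]
  rw [this, Lb_monomial]

lemma Lb_X_mul (f : R[X]) : Lb b (X * f) = Lb b (f.comp (X + 1)) := by
  induction f using Polynomial.induction_on' with
  | add f g hf hg => rw [mul_add, map_add, add_comp, map_add, hf, hg]
  | monomial n a =>
    rw [mul_comm, monomial_mul_X, Lb_monomial, monomial_comp]
    rw [← smul_eq_C_mul, map_smul, Lb_X_add_one_pow b hb, smul_eq_mul]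

lemma Lb_ff_mul : ∀ (k : ℕ) (f : R[X]),
    Lb b ((∏ i ∈ range k, (X - C (i : R))) * f) = Lb b (f.comp (X + C (k : R))) := by
  intro k
  induction k with
  | zero => intro f; simp
  | succ k ih =>
    intro f
    rw [Finset.prod_range_succ' (fun i => (X - C (i : R)))]
    have h0 : (X - C ((0 : ℕ) : R)) = X := by simp
    rw [h0]
    have : (∏ i ∈ range k, (X - C ((i + 1 : ℕ) : R))) * X * f
        = X * ((∏ i ∈ range k, (X - C ((i + 1 : ℕ) : R))) * f) := by ring
    rw [this, Lb_X_mul b hb, mul_comp, Polynomial.prod_comp]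
    have hprod : (∏ i ∈ range k, ((X - C ((i + 1 : ℕ) : R)).comp (X + 1)))
        = ∏ i ∈ range k, (X - C (i : R)) := by
      refine Finset.prod_congr rfl fun i _ => ?_
      rw [sub_comp, X_comp, C_comp, Nat.cast_add, Nat.cast_one, C_add, C_1]
      ring
    have hcomp : (X + 1 : R[X]).comp (X + C (k : R)) = X + C (((k : ℕ) + 1 : ℕ) : R) := by
      rw [add_comp, X_comp, one_comp, Nat.cast_add, Nat.cast_one, C_add, C_1, add_assoc]
    rw [hprod, ih, Polynomial.comp_assoc, hcomp]
end Umbral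

/-! ### The product `∏ (X - i) = X^p - X` over `ZMod p` -/

section ZModP
open Polynomial
variable {p : ℕ} [hp : Fact p.Prime]

lemma prod_range_X_sub_C : (∏ i ∈ range p, (X - C (i : ZMod p))) = X ^ p - X := by
  have h1 : (∏ i ∈ range p, (X - C (i : ZMod p))) = ∏ a : ZMod p, (X - C a) := by
    refine Finset.prod_nbij' (fun i => (i : ZMod p)) (fun a => a.val) ?_ ?_ ?_ ?_ ?_
    · intro i _; exact Finset.mem_univ _
    · intro a _; simpa [Finset.mem_range] using ZMod.val_lt a
    · intro i hi; simp only [Finset.mem_range] at hi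
      exact ZMod.val_natCast_of_lt hi
    · intro a _; exact ZMod.natCast_val a |>.trans (ZMod.cast_id p a)
    · intro i _; rfl
  rw [h1]
  have hq : Fintype.card (ZMod p) = p := ZMod.card p
  have hroots := FiniteField.roots_X_pow_card_sub_X (ZMod p)
  rw [hq] at hroots
  have hmonic : (X ^ p - X : (ZMod p)[X]).Monic := by
    apply Polynomial.monic_X_pow_sub
    rw [Polynomial.degree_X]
    exact_mod_cast hp.out.one_lt
  have hdeg : (X ^ p - X : (ZMod p)[X]).natDegree = p :=
    FiniteField.X_pow_card_sub_X_natDegree_eq (ZMod p) hp.out.one_lt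
  have := Polynomial.prod_multiset_X_sub_C_of_monic_of_roots_card_eq hmonic
    (by rw [hroots, hdeg]; simp [hq])
  rw [hroots] at this
  rw [← this, Finset.prod_eq_multiset_prod]

lemma touchard_zmod (b : ℕ → ZMod p)
    (hb : ∀ n, b (n + 1) = ∑ k ∈ range (n + 1), (n.choose k : ZMod p) * b k) (n : ℕ) :
    b (n + p) = b n + b (n + 1) := by
  have h1 : (X ^ (n + p) : (ZMod p)[X])
      = (∏ i ∈ range p, (X - C (i : ZMod p))) * X ^ n + X * X ^ n := by
    rw [prod_range_X_sub_C]
    rw [pow_add]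
    ring
  have h2 := congrArg (Lb b) h1
  rw [Lb_X_pow, map_add, Lb_ff_mul b hb, Lb_X_mul b hb] at h2
  rw [ZMod.natCast_self, map_zero, add_zero, Polynomial.comp_X, Lb_X_pow] at h2
  rw [Polynomial.X_pow_comp] at h2
  rw [Lb_X_add_one_pow b hb] at h2
  exact h2
end ZModP

/-! ### Iterating the recurrence -/

lemma iter_lemma {R : Type*} [CommRing R] (b : ℕ → R) (q : ℕ) (c : R)
    (H : ∀ n, b (n + q) = c * b n + b (n + 1)) :
    ∀ (k n : ℕ), b (n + k * q)
      = ∑ j ∈ range (k + 1), (k.choose j : R) * c ^ (k - j) * b (n + j) := by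
  intro k
  induction k with
  | zero => intro n; simp
  | succ k ih =>
    intro n
    have h1 : n + (k + 1) * q = (n + k * q) + q := by ring
    have h2 : (n + k * q) + 1 = (n + 1) + k * q := by ring
    rw [h1, H, ih n, h2, ih (n + 1)]
    rw [Finset.sum_range_succ' (fun j => (((k+1).choose j : R)) * c ^ (k + 1 - j) * b (n + j))]
    simp only [Nat.choose_succ_succ, Nat.succ_sub_succ, Nat.cast_add, add_mul,
      Nat.choose_zero_right, Nat.cast_one, one_mul, Nat.sub_zero, add_zero]
    rw [Finset.sum_add_distrib]
    have hc : c * ∑ j ∈ range (k + 1), (k.choose j : R) * c ^ (k - j) * b (n + j)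
        = ∑ j ∈ range (k + 1), (k.choose j : R) * c ^ (k - j + 1) * b (n + j) := by
      rw [Finset.mul_sum]
      exact Finset.sum_congr rfl fun j _ => by rw [pow_succ]; ring
    have hpeel : ∑ j ∈ range (k + 1), (k.choose j : R) * c ^ (k - j + 1) * b (n + j)
        = ∑ j ∈ range (k + 1), (k.choose (j+1) : R) * c ^ (k - j) * b (n + (j + 1))
          + c ^ (k + 1) * b (n + 0) := by
      rw [Finset.sum_range_succ' (fun j => (k.choose j : R) * c ^ (k - j + 1) * b (n + j)),
        Finset.sum_range_succ (fun j => (k.choose (j+1) : R) * c ^ (k - j) * b (n + (j + 1)))]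
      simp only [Nat.choose_zero_right, Nat.cast_one, one_mul, Nat.sub_zero,
        Nat.choose_succ_self, Nat.cast_zero, zero_mul, add_zero]
      congr 1
      refine Finset.sum_congr rfl fun j hj => ?_
      simp only [Finset.mem_range] at hj
      have : k - (j + 1) + 1 = k - j := by omega
      rw [this]
    rw [hc, hpeel]
    have hsh : ∀ j, n + 1 + j = n + (j + 1) := fun j => by ring
    simp only [hsh, Nat.succ_eq_add_one, add_zero]
    ring

/-! ### Main theorem -/

lemma key_lemma (p : ℕ) (hp : p.Prime) :
    ∀ m : ℕ, 1 ≤ m → ∀ n : ℕ,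
      ((bell (n + p ^ m) : ZMod p)) = (m : ZMod p) * bell n + bell (n + 1) := by
  haveI : Fact p.Prime := ⟨hp⟩
  set b : ℕ → ZMod p := fun n => (bell n : ZMod p) with hbdef
  have hb : ∀ n, b (n + 1) = ∑ k ∈ range (n + 1), (n.choose k : ZMod p) * b k := by
    intro n
    simp only [hbdef, bell_succ n]
    push_cast
    rfl
  have tb : ∀ n, b (n + p) = b n + b (n + 1) := touchard_zmod b hb
  intro m hm
  induction m with
  | zero => omega
  | succ m ih =>
    rcases Nat.eq_or_lt_of_le hm with h1 | h1
    · -- m + 1 = 1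
      intro n
      have : m = 0 := by omega
      subst this
      simpa using tb n
    · have hm' : 1 ≤ m := by omega
      have H : ∀ n, b (n + p ^ m) = (m : ZMod p) * b n + b (n + 1) := ih hm'
      intro n
      have hpow : n + p ^ (m + 1) = n + p * p ^ m := by rw [pow_succ]; ring
      show b (n + p ^ (m + 1)) = _
      rw [hpow, iter_lemma b (p ^ m) (m : ZMod p) H p n, Finset.sum_range_succ]
      have hmid : ∑ j ∈ range p, (p.choose j : ZMod p) * (m : ZMod p) ^ (p - j) * b (n + j)
          = (m : ZMod p) ^ p * b n := by
        rw [Finset.sum_eq_single 0]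
        · simp
        · intro j hj hne
          have hdvd : p ∣ p.choose j :=
            hp.dvd_choose_self hne (Finset.mem_range.mp hj)
          have : (p.choose j : ZMod p) = 0 := (ZMod.natCast_eq_zero_iff _ _).mpr hdvd
          rw [this, zero_mul, zero_mul]
        · intro h
          exact absurd (Finset.mem_range.mpr hp.pos) h
      rw [hmid]
      simp only [Nat.choose_self, Nat.sub_self, pow_zero, Nat.cast_one, one_mul, mul_one]
      rw [tb n, ZMod.pow_card]
      push_cast
      ring

theorem touchard_congruence (p : ℕ) (hp : p.Prime) (n m : ℕ) (hm : 1 ≤ m) :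
    bell (n + p ^ m) ≡ m * bell n + bell (n + 1) [MOD p] := by
  haveI : Fact p.Prime := ⟨hp⟩
  rw [← ZMod.natCast_eq_natCast_iff]
  push_cast
  rw [key_lemma p hp m hm n]
end

section
/- For all natural numbers n ≥ 0, all integers r, and all natural numbers m ≥ 0, Σ_{k=0}^{n} C(n,k) · B_{k,r} · m^{n-k} = B_{n,r+m}. -/
open Finset

lemma key (n j : ℕ) (hj : j ≤ n) (r : ℤ) (m : ℕ) :
    ∑ k ∈ Finset.range (n + 1), (n.choose k : ℤ) * (k.choose j : ℤ) * r ^ (k - j) * (m : ℤ) ^ (n - k)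
      = (n.choose j : ℤ) * (r + m) ^ (n - j) := by
  rw [← Finset.sum_subset (s₁ := Finset.Ico j (n + 1)) (by
      intro x hx; simp at hx ⊢; omega)
      (by
      intro x hx hx'
      simp only [Finset.mem_range, Finset.mem_Ico, not_and, not_le] at hx hx'
      have : x < j := by omega
      rw [Nat.choose_eq_zero_of_lt this]
      push_cast; ring)]
  rw [Finset.sum_Ico_eq_sum_range]
  have hnj : n + 1 - j = (n - j) + 1 := by omega
  rw [hnj, add_pow, Finset.mul_sum]
  apply Finset.sum_congr rfl
  intro i hi
  simp only [Finset.mem_range] at hi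
  have hij : i ≤ n - j := by omega
  have h1 : Nat.choose n (j + i) * Nat.choose (j + i) j = n.choose j * (n - j).choose i := by
    rw [Nat.choose_mul (n := n) (k := j + i) (s := j) (by omega)]
    congr 1
    · simp
  have h2 : j + i - j = i := by omega
  have h3 : n - (j + i) = n - j - i := by omega
  rw [h2, h3]
  rw [← Nat.cast_mul, h1]
  push_cast
  ring

theorem rBell_shift (n : ℕ) (r : ℤ) (m : ℕ) :
    ∑ k ∈ Finset.range (n + 1), (n.choose k : ℤ) * rBell k r * (m : ℤ) ^ (n - k)
      = rBell n (r + m) := by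
  have step : ∀ k ∈ Finset.range (n + 1),
      (n.choose k : ℤ) * rBell k r * (m : ℤ) ^ (n - k)
        = ∑ j ∈ Finset.range (n + 1),
            (n.choose k : ℤ) * ((k.choose j : ℤ) * r ^ (k - j) * (bell j : ℤ)) * (m : ℤ) ^ (n - k) := by
    intro k hk
    simp only [Finset.mem_range] at hk
    rw [rBell, Finset.mul_sum, Finset.sum_mul]
    refine Finset.sum_subset (by intro x hx; simp at hx ⊢; omega) ?_
    intro x hx hx'
    simp only [Finset.mem_range, not_lt] at hx hx'
    rw [Nat.choose_eq_zero_of_lt (show k < x by omega)]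
    push_cast; ring
  rw [Finset.sum_congr rfl step, Finset.sum_comm, rBell]
  apply Finset.sum_congr rfl
  intro j hj
  simp only [Finset.mem_range] at hj
  have hkey := key n j (by omega) r m
  calc ∑ k ∈ Finset.range (n + 1),
        (n.choose k : ℤ) * ((k.choose j : ℤ) * r ^ (k - j) * (bell j : ℤ)) * (m : ℤ) ^ (n - k)
      = (∑ k ∈ Finset.range (n + 1),
          (n.choose k : ℤ) * (k.choose j : ℤ) * r ^ (k - j) * (m : ℤ) ^ (n - k)) * (bell j : ℤ) := by
        rw [Finset.sum_mul]; apply Finset.sum_congr rfl; intro k _; ring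
    _ = (n.choose j : ℤ) * (r + m) ^ (n - j) * (bell j : ℤ) := by rw [hkey]
end

section
/- For every prime p, natural numbers a ≥ 1 and n ≥ 0, and every integer r, the r-Bell numbers satisfy B_{n+p^a, r} ≡ B_{n+1,r} + a·B_{n,r} (mod p). -/
open Finset

lemma S2_eq_zero : ∀ n k, n < k → S2 n k = 0 := by
  intro n
  induction n with
  | zero => intro k hk; match k, hk with | k + 1, _ => rfl
  | succ n ih =>
    intro k hk
    match k, hk with
    | k + 1, hk =>
      rw [S2, ih (k+1) (by omega), ih k (by omega)]
      ring

lemma S2_self : ∀ n, S2 n n = 1 := by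
  intro n
  induction n with
  | zero => rfl
  | succ n ih => rw [S2, ih, S2_eq_zero n (n+1) (by omega)]; ring

/-- alternating sum `T n k = ∑ (-1)^i C(k,i) (k-i)^n`. -/
def Tsum (n k : ℕ) : ℤ := ∑ i ∈ range (k + 1), (-1 : ℤ) ^ i * (k.choose i : ℤ) * ((k - i : ℕ) ^ n : ℕ)

lemma Tsum_succ_succ (n k : ℕ) :
    Tsum (n + 1) (k + 1) = (k + 1) * (Tsum n (k + 1) + Tsum n k) := by
  have h1 : Tsum (n + 1) (k + 1)
      = (k + 1 : ℤ) * ∑ i ∈ range (k + 2), (-1 : ℤ) ^ i * (k.choose i : ℤ) * ((k + 1 - i : ℕ) ^ n : ℕ) := by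
    rw [Tsum, Finset.mul_sum]
    apply Finset.sum_congr rfl
    intro i _
    have key : (k + 1).choose i * (k + 1 - i) = (k + 1) * k.choose i := by
      rw [mul_comm (k+1) (k.choose i)]; exact (Nat.choose_mul_succ_eq k i).symm
    have key' : ((k + 1).choose i : ℤ) * ((k + 1 - i : ℕ) : ℤ) = ((k:ℤ) + 1) * (k.choose i : ℤ) := by
      exact_mod_cast congrArg (Nat.cast : ℕ → ℤ) key
    push_cast
    linear_combination ((-1 : ℤ)^i * ((k + 1 - i : ℕ) : ℤ)^n) * key'
  rw [h1]
  congr 1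
  rw [Tsum, Tsum]
  rw [Finset.sum_range_succ' (fun i => (-1 : ℤ) ^ i * (k.choose i : ℤ) * ((k + 1 - i : ℕ) ^ n : ℕ)),
      Finset.sum_range_succ' (fun i => (-1 : ℤ) ^ i * ((k+1).choose i : ℤ) * ((k + 1 - i : ℕ) ^ n : ℕ))]
  have hS : ∑ i ∈ range (k + 1), (-1 : ℤ) ^ (i+1) * (k.choose (i+1) : ℤ) * ((k + 1 - (i+1) : ℕ) ^ n : ℕ)
      = ∑ i ∈ range (k + 1), ((-1 : ℤ) ^ (i+1) * ((k+1).choose (i+1) : ℤ) * ((k + 1 - (i+1) : ℕ) ^ n : ℕ)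
          + (-1 : ℤ) ^ i * (k.choose i : ℤ) * ((k - i : ℕ) ^ n : ℕ)) := by
    apply Finset.sum_congr rfl
    intro i _
    have hp : (k + 1).choose (i + 1) = k.choose i + k.choose (i + 1) := Nat.choose_succ_succ k i
    have h2 : (k + 1 - (i+1) : ℕ) = (k - i : ℕ) := by omega
    rw [h2, hp]
    push_cast
    ring
  rw [Finset.sum_add_distrib] at hS
  simp only [Nat.choose_zero_right, Nat.sub_zero, pow_zero, one_mul, Nat.cast_one]
  linarith [hS]

lemma factorial_mul_S2 : ∀ n k, ((k.factorial * S2 n k : ℕ) : ℤ) = Tsum n k := by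
  intro n
  induction n with
  | zero =>
    intro k
    match k with
    | 0 => decide
    | k + 1 =>
      rw [S2]
      have : Tsum 0 (k + 1) = ∑ i ∈ range (k + 2), (-1 : ℤ) ^ i * ((k+1).choose i : ℤ) := by
        rw [Tsum]; apply Finset.sum_congr rfl; intro i _; simp
      rw [this, Int.alternating_sum_range_choose]
      simp
  | succ n ih =>
    intro k
    match k with
    | 0 => rw [S2]; simp [Tsum]
    | k + 1 =>
      rw [S2, Tsum_succ_succ, ← ih (k+1), ← ih k]
      have : (k+1).factorial = (k+1) * k.factorial := Nat.factorial_succ k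
      rw [this]
      push_cast
      ring

lemma S2_zero_right (j : ℕ) : S2 0 j = if j = 0 then 1 else 0 := by
  match j with
  | 0 => rfl
  | j + 1 => rfl

lemma S2_one_right (j : ℕ) : S2 1 j = if j = 1 then 1 else 0 := by
  match j with
  | 0 => rfl
  | 1 => rfl
  | j + 2 => exact S2_eq_zero 1 (j+2) (by omega)

lemma choose_sum_shift {M : Type*} [CommRing M] (m : ℕ) (c : M) (g : ℕ → M) :
    ∑ i ∈ range (m + 2), (((m+1).choose i : ℕ) : M) * c ^ (m + 1 - i) * g i
      = c * (∑ i ∈ range (m + 1), ((m.choose i : ℕ) : M) * c ^ (m - i) * g i)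
        + ∑ i ∈ range (m + 1), ((m.choose i : ℕ) : M) * c ^ (m - i) * g (i + 1) := by
  rw [Finset.sum_range_succ' (fun i => (((m+1).choose i : ℕ) : M) * c ^ (m + 1 - i) * g i)]
  have hsplit : ∀ i ∈ range (m+1), (((m+1).choose (i+1) : ℕ) : M) * c ^ (m + 1 - (i+1)) * g (i+1)
      = ((m.choose i : ℕ) : M) * c ^ (m - i) * g (i+1) + ((m.choose (i+1) : ℕ) : M) * c ^ (m - i) * g (i+1) := by
    intro i _
    rw [Nat.choose_succ_succ, Nat.succ_sub_succ]
    push_cast; ring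
  rw [Finset.sum_congr rfl hsplit, Finset.sum_add_distrib]
  have hb : (∑ i ∈ range (m+1), ((m.choose (i+1) : ℕ) : M) * c ^ (m - i) * g (i+1))
        + (((m+1).choose 0 : ℕ) : M) * c ^ (m + 1 - 0) * g 0
      = c * ∑ i ∈ range (m + 1), ((m.choose i : ℕ) : M) * c ^ (m - i) * g i := by
    rw [Finset.mul_sum,
        Finset.sum_range_succ (fun i => ((m.choose (i+1) : ℕ) : M) * c ^ (m - i) * g (i+1)),
        Finset.sum_range_succ' (fun i => c * (((m.choose i : ℕ) : M) * c ^ (m - i) * g i))]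
    simp only [Nat.choose_succ_self, Nat.cast_zero, zero_mul, add_zero, Nat.choose_zero_right,
      Nat.cast_one, one_mul, Nat.sub_zero, Nat.sub_self, pow_zero]
    congr 1
    · apply Finset.sum_congr rfl
      intro i hi
      have : m - i = (m - (i+1)) + 1 := by simp at hi; omega
      rw [this]
      ring
    · ring
  linear_combination hb

section PrimeLemmas

variable (p : ℕ) [hp : Fact p.Prime]

lemma S2_p_mod (k : ℕ) : (S2 p k : ZMod p) = (S2 1 k : ZMod p) + if k = p then 1 else 0 := by
  rcases lt_trichotomy k p with hk | hk | hk
  · rw [if_neg (by omega)]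
    have key : ((k.factorial : ZMod p)) * (S2 p k : ZMod p) = ((k.factorial : ZMod p)) * (S2 1 k : ZMod p) := by
      have e1 := congrArg (Int.cast : ℤ → ZMod p) (factorial_mul_S2 p k)
      have e2 := congrArg (Int.cast : ℤ → ZMod p) (factorial_mul_S2 1 k)
      have eT : ((Tsum p k : ℤ) : ZMod p) = ((Tsum 1 k : ℤ) : ZMod p) := by
        rw [Tsum, Tsum]
        push_cast
        apply Finset.sum_congr rfl
        intro i _
        rw [ZMod.pow_card, pow_one]
      push_cast at e1 e2
      rw [e1, e2, eT]
    have hfac : (k.factorial : ZMod p) ≠ 0 := by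
      rw [Ne, ZMod.natCast_eq_zero_iff]
      intro hdvd
      exact absurd (hp.out.dvd_factorial.mp hdvd) (by omega)
    rw [add_zero]
    exact mul_left_cancel₀ hfac key
  · subst hk
    rw [S2_self, if_pos rfl, S2_one_right, if_neg (by have := hp.out.one_lt; omega)]
    simp
  · rw [S2_eq_zero p k hk, S2_eq_zero 1 k (by have := hp.out.one_lt; omega), if_neg (by omega)]
    simp


lemma S2_touchard : ∀ n k, (S2 (n + p) k : ZMod p) =
    (S2 (n + 1) k : ZMod p) + (if p ≤ k then (S2 n (k - p) : ZMod p) else 0) := by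
  have hp2 := hp.out.two_le
  intro n
  induction n with
  | zero =>
    intro k
    rw [zero_add, S2_p_mod]
    congr 1
    rcases lt_trichotomy k p with hk | hk | hk
    · rw [if_neg (by omega), if_neg (by omega)]
    · subst hk
      rw [if_pos rfl, if_pos le_rfl, Nat.sub_self]
      norm_num [S2]
    · rw [if_neg (by omega), if_pos (by omega), S2_zero_right, if_neg (by omega)]
      simp
  | succ n ih =>
    intro k
    have hadd : n + 1 + p = (n + p) + 1 := by omega
    match k with
    | 0 =>
      rw [hadd, S2]
      show ((0:ℕ) : ZMod p) = (S2 (n+2) 0 : ZMod p) + _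
      rw [show S2 (n+2) 0 = 0 from rfl, if_neg (by omega)]
      simp
    | k + 1 =>
      rw [hadd, S2]
      push_cast
      rw [ih (k+1), ih k]
      have hS : (S2 (n + 1 + 1) (k+1) : ZMod p) = (k+1 : ZMod p) * (S2 (n+1) (k+1) : ZMod p) + (S2 (n+1) k : ZMod p) := by
        rw [show S2 (n+1+1) (k+1) = (k+1) * S2 (n+1) (k+1) + S2 (n+1) k from rfl]
        push_cast; ring
      rw [hS]
      have key : ((k : ZMod p) + 1) * (if p ≤ k + 1 then (S2 n (k + 1 - p) : ZMod p) else 0)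
            + (if p ≤ k then (S2 n (k - p) : ZMod p) else 0)
          = (if p ≤ k + 1 then (S2 (n+1) (k + 1 - p) : ZMod p) else 0) := by
        rcases lt_trichotomy (k+1) p with hk | hk | hk
        · rw [if_neg (by omega), if_neg (by omega), if_neg (by omega)]; ring
        · rw [if_pos (by omega), if_neg (by omega), if_pos (by omega)]
          have h0 : ((k : ZMod p) + 1) = 0 := by
            have : ((k+1 : ℕ) : ZMod p) = ((p : ℕ) : ZMod p) := by rw [hk]
            push_cast at this
            rw [this, ZMod.natCast_self]
          rw [h0, show k + 1 - p = 0 from by omega]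
          rw [show S2 (n+1) 0 = 0 from rfl]
          simp
        · rw [if_pos (by omega), if_pos (by omega), if_pos (by omega)]
          have hj : k + 1 - p = (k - p) + 1 := by omega
          rw [hj, show S2 (n+1) ((k-p)+1) = ((k-p) + 1) * S2 n ((k-p)+1) + S2 n (k-p) from rfl]
          have hc : ((k : ZMod p) + 1) = ((k - p : ℕ) : ZMod p) + 1 := by
            have : ((k : ℕ) : ZMod p) = ((k - p + p : ℕ) : ZMod p) := by rw [Nat.sub_add_cancel (by omega)]
            push_cast [ZMod.natCast_self] at this
            rw [this]; ring
          push_cast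
          rw [hc]
          try ring
      rw [← key]
      ring

lemma bell_touchard (n : ℕ) : (bell (n + p) : ZMod p) = (bell (n + 1) : ZMod p) + (bell n : ZMod p) := by
  have hp2 := hp.out.two_le
  rw [bell, bell, bell]
  push_cast
  have : ∀ k ∈ range (n + p + 1), (S2 (n + p) k : ZMod p)
      = (S2 (n + 1) k : ZMod p) + (if p ≤ k then (S2 n (k - p) : ZMod p) else 0) :=
    fun k _ => S2_touchard p n k
  rw [Finset.sum_congr rfl this, Finset.sum_add_distrib]
  congr 1
  · symm
    apply Finset.sum_subset
    · intro x hx; simp at hx ⊢; omega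
    · intro x _ hx
      simp only [Finset.mem_range, not_lt] at hx
      exact_mod_cast congrArg (Nat.cast : ℕ → ZMod p) (S2_eq_zero (n+1) x (by omega))
  · rw [show n + p + 1 = p + (n + 1) from by omega, Finset.sum_range_add]
    have h1 : ∑ i ∈ range p, (if p ≤ i then (S2 n (i - p) : ZMod p) else 0) = 0 := by
      apply Finset.sum_eq_zero
      intro i hi
      rw [if_neg (by simp at hi; omega)]
    rw [h1, zero_add]
    apply Finset.sum_congr rfl
    intro i _
    rw [if_pos (by omega), show p + i - p = i from by omega]


lemma bell_mul_touchard : ∀ m n, (bell (n + m * p) : ZMod p) =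
    ∑ i ∈ range (m + 1), (m.choose i : ZMod p) * (bell (n + i) : ZMod p) := by
  intro m
  induction m with
  | zero => intro n; simp
  | succ m ih =>
    intro n
    have h1 : n + (m + 1) * p = (n + m * p) + p := by ring
    rw [h1, bell_touchard]
    have h2 : n + m * p + 1 = (n + 1) + m * p := by ring
    rw [h2, ih (n+1), ih n]
    have := choose_sum_shift (M := ZMod p) m 1 (fun i => (bell (n + i) : ZMod p))
    simp only [one_pow, mul_one, one_mul] at this
    have h3 : ∑ i ∈ range (m + 1), (m.choose i : ZMod p) * (bell (n + 1 + i) : ZMod p)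
        = ∑ i ∈ range (m + 1), (m.choose i : ZMod p) * (bell (n + (i + 1)) : ZMod p) := by
      apply Finset.sum_congr rfl
      intro i _
      rw [show n + 1 + i = n + (i + 1) from by ring]
    rw [h3, this]
    ring

lemma bell_pow_touchard (n : ℕ) : ∀ a : ℕ, 1 ≤ a →
    (bell (n + p ^ a) : ZMod p) = (bell (n + 1) : ZMod p) + (a : ZMod p) * (bell n : ZMod p) := by
  intro a
  induction a with
  | zero => omega
  | succ a ih =>
    intro _
    rcases Nat.eq_zero_or_pos a with rfl | ha
    · rw [pow_one, bell_touchard]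
      push_cast; ring
    · have hm : n + p ^ (a + 1) = n + (p ^ a) * p := by rw [pow_succ]
      rw [hm, bell_mul_touchard]
      have hsub : ({0, p ^ a} : Finset ℕ) ⊆ range (p ^ a + 1) := by
        intro x hx
        simp at hx ⊢
        rcases hx with rfl | rfl <;> omega
      have hzero : ∀ x ∈ range (p ^ a + 1), x ∉ ({0, p ^ a} : Finset ℕ) →
          ((p ^ a).choose x : ZMod p) * (bell (n + x) : ZMod p) = 0 := by
        intro x _ hx
        simp only [Finset.mem_insert, Finset.mem_singleton, not_or] at hx
        have : ((p ^ a).choose x : ZMod p) = 0 := by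
          rw [ZMod.natCast_eq_zero_iff]
          exact Nat.Prime.dvd_choose_pow hp.out hx.1 hx.2
        rw [this, zero_mul]
      rw [← Finset.sum_subset hsub hzero]
      have hne : (0 : ℕ) ≠ p ^ a := by
        have := hp.out.two_le
        have : 0 < p ^ a := Nat.pow_pos (by omega)
        omega
      rw [Finset.sum_pair hne]
      simp only [Nat.choose_zero_right, Nat.choose_self, Nat.cast_one, one_mul, add_zero]
      rw [ih ha]
      push_cast
      ring

end PrimeLemmas

def Aseq (r : ℤ) (n s : ℕ) : ℤ :=
  ∑ k ∈ range (n + 1), (n.choose k : ℤ) * r ^ (n - k) * (bell (k + s) : ℤ)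

lemma rBell_eq_Aseq (n : ℕ) (r : ℤ) : rBell n r = Aseq r n 0 := rfl

lemma Aseq_succ (r : ℤ) (n s : ℕ) : Aseq r (n + 1) s = r * Aseq r n s + Aseq r n (s + 1) := by
  have h := choose_sum_shift (M := ℤ) n r (fun k => (bell (k + s) : ℤ))
  rw [Aseq, Aseq, Aseq]
  rw [show n + 1 + 1 = n + 2 from rfl, h]
  congr 1
  apply Finset.sum_congr rfl
  intro k _
  rw [show k + 1 + s = k + (s + 1) from by omega]

lemma Aseq_add (r : ℤ) : ∀ m n s, Aseq r (n + m) s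
    = ∑ i ∈ range (m + 1), (m.choose i : ℤ) * r ^ (m - i) * Aseq r n (i + s) := by
  intro m
  induction m with
  | zero => intro n s; simp
  | succ m ih =>
    intro n s
    have h1 : n + (m + 1) = (n + m) + 1 := by omega
    rw [h1, Aseq_succ, ih n s, ih n (s + 1)]
    have h := choose_sum_shift (M := ℤ) m r (fun i => Aseq r n (i + s))
    rw [show m + 1 + 1 = m + 2 from rfl] at h
    rw [h]
    congr 1
    apply Finset.sum_congr rfl
    intro i _
    rw [show i + 1 + s = i + (s + 1) from by omega]


theorem rBell_touchard (p : ℕ) (hp : p.Prime) (a n : ℕ) (ha : 1 ≤ a) (r : ℤ) :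
    rBell (n + p ^ a) r ≡ rBell (n + 1) r + a * rBell n r [ZMOD p] := by
  haveI : Fact p.Prime := ⟨hp⟩
  rw [← ZMod.intCast_eq_intCast_iff]
  push_cast
  have hm : 2 ≤ p ^ a := by
    calc 2 ≤ p := hp.two_le
    _ = p ^ 1 := (pow_one p).symm
    _ ≤ p ^ a := Nat.pow_le_pow_right (by have := hp.two_le; omega) ha
  -- main computation in ZMod p
  have e1 : ((rBell (n + p ^ a) r : ℤ) : ZMod p)
      = ∑ i ∈ range (p ^ a + 1), ((p ^ a).choose i : ZMod p) * ((r : ZMod p)) ^ (p ^ a - i)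
          * ((Aseq r n (i + 0) : ℤ) : ZMod p) := by
    rw [rBell_eq_Aseq, Aseq_add r (p ^ a) n 0]
    push_cast
    rfl
  have hsub : ({0, p ^ a} : Finset ℕ) ⊆ range (p ^ a + 1) := by
    intro x hx; simp at hx ⊢; rcases hx with rfl | rfl <;> omega
  have hzero : ∀ x ∈ range (p ^ a + 1), x ∉ ({0, p ^ a} : Finset ℕ) →
      ((p ^ a).choose x : ZMod p) * ((r : ZMod p)) ^ (p ^ a - x) * ((Aseq r n (x + 0) : ℤ) : ZMod p) = 0 := by
    intro x _ hx
    simp only [Finset.mem_insert, Finset.mem_singleton, not_or] at hx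
    have : ((p ^ a).choose x : ZMod p) = 0 := by
      rw [ZMod.natCast_eq_zero_iff]
      exact Nat.Prime.dvd_choose_pow hp hx.1 hx.2
    rw [this, zero_mul, zero_mul]
  rw [e1, ← Finset.sum_subset hsub hzero, Finset.sum_pair (show (0:ℕ) ≠ p ^ a by omega)]
  simp only [Nat.choose_zero_right, Nat.choose_self, Nat.cast_one, one_mul, Nat.sub_zero,
    Nat.sub_self, pow_zero, mul_one, zero_add]
  rw [ZMod.pow_card_pow]
  -- now: r * cast (Aseq r n 0) + cast (Aseq r n (p^a + 0)) = cast(rBell(n+1)) + a * cast(rBell n)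
  have e2 : ((Aseq r n (p ^ a + 0) : ℤ) : ZMod p)
      = ((Aseq r n 1 : ℤ) : ZMod p) + (a : ZMod p) * ((Aseq r n 0 : ℤ) : ZMod p) := by
    rw [Aseq, Aseq, Aseq]
    push_cast
    rw [Finset.mul_sum, ← Finset.sum_add_distrib]
    apply Finset.sum_congr rfl
    intro k _
    have hb : ((bell (k + (p ^ a + 0)) : ℕ) : ZMod p)
        = ((bell (k + 1) : ℕ) : ZMod p) + (a : ZMod p) * ((bell k : ℕ) : ZMod p) := by
      rw [show k + (p ^ a + 0) = k + p ^ a from by omega]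
      exact bell_pow_touchard p k a ha
    push_cast at hb
    rw [hb]
    ring
  rw [e2]
  have e3 : ((rBell (n + 1) r : ℤ) : ZMod p)
      = (r : ZMod p) * ((Aseq r n 0 : ℤ) : ZMod p) + ((Aseq r n 1 : ℤ) : ZMod p) := by
    rw [rBell_eq_Aseq, Aseq_succ]
    push_cast
    ring
  rw [e3, rBell_eq_Aseq]
  ring
end

section
/- For all natural numbers n ≥ 1 and r ≥ 1, the identity Σ_{k=0}^{n} S_r(n,k) (−1)^{k+r−1} D_{k+r−1} = B_{n−1,r} holds, where S_r(n,k) is the r-Stirling number of the second kind and D_j is the j-th derangement number. -/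
open Finset

lemma rS2_eq_zero (r : ℕ) : ∀ n k, n < k → rS2 r n k = 0 := by
  intro n
  induction n with
  | zero =>
    intro k hk
    match k, hk with
    | k + 1, _ => rfl
  | succ n ih =>
    intro k hk
    match k, hk with
    | k + 1, hk =>
      show rS2 r n k + (k + 1 + r) * rS2 r n (k + 1) = 0
      rw [ih k (by omega), ih (k + 1) (by omega)]
      ring

theorem sum_rS2_derangement (n r : ℕ) (hn : 1 ≤ n) (hr : 1 ≤ r) :
    ∑ k ∈ Finset.range (n + 1),
        (rS2 r n k : ℤ) * (-1 : ℤ) ^ (k + r - 1) * (numDerangements (k + r - 1) : ℤ)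
      = (rBellNat (n - 1) r : ℤ) := by
  obtain ⟨m, rfl⟩ : ∃ m, n = m + 1 := ⟨n - 1, by omega⟩
  obtain ⟨s, rfl⟩ : ∃ s, r = s + 1 := ⟨r - 1, by omega⟩
  set g : ℕ → ℤ := fun j => (-1 : ℤ) ^ j * (numDerangements j : ℤ) with hg
  have g_succ : ∀ j, g (j + 1) = -((j : ℤ) + 1) * g j + 1 := by
    intro j
    have hsq : ((-1 : ℤ)) ^ j * (-1) ^ j = 1 := by
      rw [← pow_add, ← two_mul, pow_mul]; norm_num
    simp only [hg, numDerangements_succ, pow_succ]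
    linear_combination hsq
  have hgoal : ∀ k, k + (s + 1) - 1 = k + s := fun k => by omega
  simp only [hgoal, Nat.add_sub_cancel]
  set h : ℕ → ℤ := fun j => ((j : ℤ) + s + 1) * (rS2 (s + 1) m j : ℤ) * g (j + s) with hh
  have key : ∀ k, (rS2 (s + 1) (m + 1) (k + 1) : ℤ) * g (k + 1 + s)
      = h (k + 1) - h k + (rS2 (s + 1) m k : ℤ) := by
    intro k
    show ((rS2 (s + 1) m k + (k + 1 + (s + 1)) * rS2 (s + 1) m (k + 1) : ℕ) : ℤ) * g (k + 1 + s)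
      = _
    simp only [hh]
    rw [show k + 1 + s = (k + s) + 1 from by omega, g_succ]
    push_cast
    ring
  rw [Finset.sum_range_succ']
  have e0 : (rS2 (s + 1) (m + 1) 0 : ℤ) * (-1 : ℤ) ^ (0 + s) * (numDerangements (0 + s) : ℤ)
      = h 0 := by
    show (((s + 1) * rS2 (s + 1) m 0 : ℕ) : ℤ) * _ * _ = _
    simp only [hh, hg, Nat.zero_add, Nat.cast_zero]
    push_cast
    ring
  rw [e0]
  have e1 : ∀ k ∈ Finset.range (m + 1),
      (rS2 (s + 1) (m + 1) (k + 1) : ℤ) * (-1 : ℤ) ^ (k + 1 + s) * (numDerangements (k + 1 + s) : ℤ)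
      = (h (k + 1) - h k) + (rS2 (s + 1) m k : ℤ) := by
    intro k _
    rw [← key k]
    simp only [hg]
    ring
  rw [Finset.sum_congr rfl e1, Finset.sum_add_distrib, Finset.sum_range_sub]
  have hm : h (m + 1) = 0 := by
    simp [hh, rS2_eq_zero (s + 1) m (m + 1) (by omega)]
  rw [hm]
  simp [rBellNat, Nat.cast_sum]
end
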